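/- The dimension of the space of fast points of a Boolean function f: F₂ⁿ → F₂ of degree d ≥ 1 is at most n − d. -/
import Mathlib


/-- First-order derivative of a Boolean function: `D_a f (x) = f (x + a) + f x`. -/
def bderiv {V : Type} [Add V] (f : V → ZMod 2) (a : V) : V → ZMod 2 :=
  fun x => f (x + a) + f x

/-- The algebraic degree of a Boolean function: the minimal total degree of a polynomial
representing it (this equals the degree of its algebraic normal form). -/
noncomputable def bdeg {σ : Type} (f : (σ → ZMod 2) → ZMod 2) : ℕ :=
  sInf { d | ∃ p : MvPolynomial σ (ZMod 2),
    (∀ x, MvPolynomial.eval x p = f x) ∧ p.totalDegree = d }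

open Finset MvPolynomial
open scoped symmDiff

namespace Stmt18Aux

variable {n : ℕ}

def ind (T : Finset (Fin n)) : Fin n → ZMod 2 := fun i => if i ∈ T then 1 else 0

lemma zmod2_em : ∀ x : ZMod 2, x = 0 ∨ x = 1 := by decide

lemma two_zmod2 : (2 : ZMod 2) = 0 := by decide

lemma card_filter_subset (R A : Finset (Fin n)) :
    ((R.powerset).filter (fun S => A ⊆ S)).card
      = if A ⊆ R then 2 ^ (R.card - A.card) else 0 := by
  split_ifs with hAR
  · have key : ((R.powerset).filter (fun S => A ⊆ S)).card = ((R \ A).powerset).card := by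
      apply Finset.card_bij' (fun S _ => S \ A) (fun S _ => S ∪ A)
      · intro S hS
        simp only [mem_filter, mem_powerset] at hS
        exact mem_powerset.mpr (sdiff_subset_sdiff hS.1 Subset.rfl)
      · intro S hS
        simp only [mem_powerset] at hS
        simp only [mem_filter, mem_powerset]
        exact ⟨union_subset (hS.trans sdiff_subset) hAR, subset_union_right⟩
      · intro S hS
        simp only [mem_filter, mem_powerset] at hS
        ext a
        simp only [mem_union, mem_sdiff]
        constructor
        · rintro (⟨h, _⟩ | h)
          · exact h
          · exact hS.2 h
        · intro h
          by_cases ha : a ∈ A <;> tauto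
      · intro S hS
        simp only [mem_powerset] at hS
        ext a
        simp only [mem_sdiff, mem_union]
        constructor
        · rintro ⟨h | h, ha⟩
          · exact h
          · exact absurd h ha
        · intro h
          have := hS h
          simp only [mem_sdiff] at this
          tauto
    rw [key, card_powerset, card_sdiff_of_subset hAR]
  · rw [filter_eq_empty_iff.mpr, card_empty]
    intro S hS
    simp only [mem_powerset] at hS
    exact fun hAS => hAR (hAS.trans hS)

lemma sum_ite_subset (R A : Finset (Fin n)) (c : ZMod 2) :
    ∑ S ∈ R.powerset, (if A ⊆ S then c else 0)
      = (if A ⊆ R then ((2 : ZMod 2)) ^ (R.card - A.card) else 0) * c := by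
  rw [← Finset.sum_filter, Finset.sum_const, ← Nat.cast_smul_eq_nsmul (ZMod 2),
    card_filter_subset]
  split_ifs with h
  · push_cast
    rw [smul_eq_mul]
  · simp

lemma sum_eval_powerset (R : Finset (Fin n)) (q : MvPolynomial (Fin n) (ZMod 2))
    (h : q.totalDegree < R.card) :
    ∑ S ∈ R.powerset, eval (ind S) q = 0 := by
  have expand : ∀ S : Finset (Fin n),
      eval (ind S) q = ∑ m ∈ q.support, coeff m q * (if m.support ⊆ S then 1 else 0) := by
    intro S
    rw [eval_eq]
    refine Finset.sum_congr rfl fun m hm => ?_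
    congr 1
    split_ifs with hsub
    · exact Finset.prod_eq_one fun i hi => by simp [ind, hsub hi]
    · obtain ⟨i, hi, hiS⟩ := Finset.not_subset.mp hsub
      refine Finset.prod_eq_zero hi ?_
      have hmi : m i ≠ 0 := Finsupp.mem_support_iff.mp hi
      simp [ind, hiS, zero_pow hmi]
  simp_rw [expand]
  rw [Finset.sum_comm]
  apply Finset.sum_eq_zero
  intro m hm
  rw [← Finset.mul_sum, sum_ite_subset]
  have hcard : m.support.card < R.card := by
    have h1 : m.support.card ≤ m.sum fun _ e => e := by
      rw [Finset.card_eq_sum_ones, Finsupp.sum]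
      exact Finset.sum_le_sum fun i hi => Nat.one_le_iff_ne_zero.mpr (Finsupp.mem_support_iff.mp hi)
    exact lt_of_le_of_lt (h1.trans (le_totalDegree hm)) h
  split_ifs with hsub
  · rw [two_zmod2, zero_pow (by omega), zero_mul, mul_zero]
  · rw [zero_mul, mul_zero]


noncomputable def ANF (f : (Fin n → ZMod 2) → ZMod 2) : MvPolynomial (Fin n) (ZMod 2) :=
  ∑ T ∈ (Finset.univ : Finset (Fin n)).powerset,
    C (∑ S ∈ T.powerset, f (ind S)) * ∏ i ∈ T, X i

lemma ind_filter (x : Fin n → ZMod 2) : ind (univ.filter fun i => x i = 1) = x := by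
  funext i
  unfold ind
  rcases zmod2_em (x i) with h | h <;> simp [h]

lemma eval_ANF (f : (Fin n → ZMod 2) → ZMod 2) (x : Fin n → ZMod 2) :
    eval x (ANF f) = f x := by
  classical
  set Xx := univ.filter fun i => x i = 1 with hXx
  have hx : ∀ T : Finset (Fin n), (∏ i ∈ T, x i) = if T ⊆ Xx then 1 else 0 := by
    intro T
    split_ifs with h
    · refine prod_eq_one fun i hi => ?_
      have := h hi
      rw [hXx, mem_filter] at this
      exact this.2
    · obtain ⟨i, hi, hiX⟩ := not_subset.mp h
      refine prod_eq_zero hi ?_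
      rcases zmod2_em (x i) with h0 | h1
      · exact h0
      · exact absurd (by rw [hXx, mem_filter]; exact ⟨mem_univ i, h1⟩) hiX
  unfold ANF
  rw [map_sum]
  simp only [map_mul, eval_C, map_prod, eval_X]
  simp_rw [hx, mul_ite, mul_one, mul_zero]
  rw [← Finset.sum_filter]
  have hfilt : (univ : Finset (Fin n)).powerset.filter (fun T => T ⊆ Xx) = Xx.powerset := by
    ext T
    simp [mem_powerset]
  rw [hfilt]
  have hinner : ∀ T ∈ Xx.powerset, (∑ S ∈ T.powerset, f (ind S))
      = ∑ S ∈ Xx.powerset, (if S ⊆ T then f (ind S) else 0) := by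
    intro T hT
    rw [mem_powerset] at hT
    rw [← Finset.sum_filter]
    congr 1
    ext S
    simp only [mem_powerset, mem_filter]
    exact ⟨fun h => ⟨h.trans hT, h⟩, fun h => h.2⟩
  rw [Finset.sum_congr rfl hinner, Finset.sum_comm]
  have : ∀ S ∈ Xx.powerset, (∑ T ∈ Xx.powerset, if S ⊆ T then f (ind S) else 0)
      = (if S ⊆ Xx then (2 : ZMod 2) ^ (Xx.card - S.card) else 0) * f (ind S) :=
    fun S _ => sum_ite_subset Xx S (f (ind S))
  rw [Finset.sum_congr rfl this]
  rw [Finset.sum_eq_single Xx]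
  · simp [ind_filter, hXx]
  · intro S hS hne
    rw [mem_powerset] at hS
    have hlt : S.card < Xx.card := card_lt_card (lt_of_le_of_ne hS hne)
    rw [if_pos hS, two_zmod2, zero_pow (by omega), zero_mul]
  · intro h
    exact absurd (mem_powerset.mpr Subset.rfl) h


lemma bdeg_nonempty (f : (Fin n → ZMod 2) → ZMod 2) :
    { d | ∃ p : MvPolynomial (Fin n) (ZMod 2),
      (∀ x, MvPolynomial.eval x p = f x) ∧ p.totalDegree = d }.Nonempty :=
  ⟨(ANF f).totalDegree, ANF f, eval_ANF f, rfl⟩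

lemma bdeg_spec (f : (Fin n → ZMod 2) → ZMod 2) :
    ∃ p : MvPolynomial (Fin n) (ZMod 2),
      (∀ x, MvPolynomial.eval x p = f x) ∧ p.totalDegree = bdeg f :=
  Nat.sInf_mem (bdeg_nonempty f)

lemma bdeg_le (f : (Fin n → ZMod 2) → ZMod 2) (p : MvPolynomial (Fin n) (ZMod 2))
    (h : ∀ x, MvPolynomial.eval x p = f x) : bdeg f ≤ p.totalDegree :=
  Nat.sInf_le ⟨p, h, rfl⟩

/-- There is a `d`-element set whose cube-sum is 1, when `bdeg f = d ≥ 1`. -/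
lemma exists_top_coeff (f : (Fin n → ZMod 2) → ZMod 2) {d : ℕ} (hd : bdeg f = d)
    (h1 : 1 ≤ d) : ∃ T : Finset (Fin n), T.card = d ∧ ∑ S ∈ T.powerset, f (ind S) = 1 := by
  by_contra hcon
  push_neg at hcon
  obtain ⟨p, hp, hpd⟩ := bdeg_spec f
  rw [hd] at hpd
  -- every T with card ≥ d has zero coefficient
  have hzero : ∀ T : Finset (Fin n), d ≤ T.card → ∑ S ∈ T.powerset, f (ind S) = 0 := by
    intro T hT
    rcases eq_or_lt_of_le hT with heq | hlt
    · have := hcon T heq.symm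
      rcases (by decide : ∀ x : ZMod 2, x = 0 ∨ x = 1) (∑ S ∈ T.powerset, f (ind S)) with h | h
      · exact h
      · exact absurd h this
    · have : ∑ S ∈ T.powerset, eval (ind S) p = 0 :=
        sum_eval_powerset T p (by omega)
      rw [← this]
      exact Finset.sum_congr rfl fun S _ => (hp (ind S)).symm
  -- hence ANF f has total degree ≤ d - 1
  have hANF : (ANF f).totalDegree ≤ d - 1 := by
    unfold ANF
    refine (totalDegree_finset_sum _ _).trans (Finset.sup_le fun T _ => ?_)
    by_cases hT : d ≤ T.card
    · rw [hzero T hT]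
      simp
    · refine (totalDegree_mul _ _).trans ?_
      have h2 : (∏ i ∈ T, (X i : MvPolynomial (Fin n) (ZMod 2))).totalDegree ≤ T.card := by
        refine (totalDegree_finset_prod _ _).trans ?_
        calc ∑ i ∈ T, (X i : MvPolynomial (Fin n) (ZMod 2)).totalDegree
            ≤ ∑ _i ∈ T, 1 := Finset.sum_le_sum fun i _ => (totalDegree_X i).le
          _ = T.card := by simp
      rw [totalDegree_C]
      omega
  have := bdeg_le f (ANF f) (eval_ANF f)
  omega


lemma pairing (f : (Fin n → ZMod 2) → ZMod 2) (u : Fin n → ZMod 2) (T : Finset (Fin n))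
    (t0 : Fin n) (ht0 : t0 ∈ T) (hut0 : u t0 = 1) (hsupp : ∀ i ∉ T, u i = 0) :
    ∑ S ∈ T.powerset, f (ind S) = ∑ S ∈ (T.erase t0).powerset, bderiv f u (ind S) := by
  classical
  set T' := T.erase t0 with hT'
  set A := (univ : Finset (Fin n)).filter (fun i => u i = 1) with hA
  set A' := A.erase t0 with hA'
  have hmemA : ∀ i, i ∈ A ↔ u i = 1 := by intro i; simp [hA]
  have ht0A : t0 ∈ A := (hmemA t0).mpr hut0
  have hAT : A ⊆ T := by
    intro i hi
    by_contra hiT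
    rw [hmemA] at hi
    rw [hsupp i hiT] at hi
    exact absurd hi (by decide)
  have hA'T' : A' ⊆ T' := by
    rw [hA', hT']
    exact erase_subset_erase t0 hAT
  have hindu : ∀ S : Finset (Fin n), ind S + u = ind (S ∆ A) := by
    intro S
    funext i
    have hui : u i = ind A i := by
      rcases zmod2_em (u i) with h | h
      · rw [h, ind, if_neg]
        rw [hmemA]
        rw [h]
        decide
      · rw [h, ind, if_pos ((hmemA i).mpr h)]
    rw [Pi.add_apply, hui]
    unfold ind
    by_cases hS : i ∈ S <;> by_cases hAi : i ∈ A <;>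
      simp [hS, hAi, Finset.mem_symmDiff] <;> decide
  have hsplit : ∀ S : Finset (Fin n), S ⊆ T' → S ∆ A = insert t0 (S ∆ A') := by
    intro S hS
    have ht0S : t0 ∉ S := fun h => (notMem_erase t0 T) (hS h)
    ext a
    by_cases ha : a = t0
    · subst ha
      simp [Finset.mem_symmDiff, ht0S, ht0A, hA']
    · simp only [Finset.mem_symmDiff, mem_insert, ha, false_or, hA', mem_erase]
      tauto
  have hTT : T = insert t0 T' := (insert_erase ht0).symm
  rw [hTT, Finset.sum_powerset_insert (notMem_erase t0 T)]
  have hrhs : ∀ S ∈ T'.powerset, bderiv f u (ind S) = f (ind S + u) + f (ind S) := fun S _ => rfl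
  rw [Finset.sum_congr rfl hrhs, Finset.sum_add_distrib]
  conv_rhs => rw [add_comm]
  congr 1
  -- ∑_{S ⊆ T'} f (insert t0 S) = ∑_{S ⊆ T'} f (ind S + u)
  refine Finset.sum_nbij' (fun S => S ∆ A') (fun S => S ∆ A') ?_ ?_ ?_ ?_ ?_
  · intro S hS
    rw [mem_powerset] at *
    exact le_trans symmDiff_le_sup (union_subset hS hA'T')
  · intro S hS
    rw [mem_powerset] at *
    exact le_trans symmDiff_le_sup (union_subset hS hA'T')
  · intro S _
    exact symmDiff_symmDiff_cancel_right A' S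
  · intro S _
    exact symmDiff_symmDiff_cancel_right A' S
  · intro S hS
    rw [mem_powerset] at hS
    rw [hindu (S ∆ A'), hsplit (S ∆ A') (le_trans symmDiff_le_sup (union_subset hS hA'T')), symmDiff_symmDiff_cancel_right]

end Stmt18Aux

open Stmt18Aux

/-- The dimension of the space of fast points of a Boolean function of degree `d ≥ 1` is at
most `n - d`. -/
theorem stmt18 {n d : ℕ} (f : (Fin n → ZMod 2) → ZMod 2)
    (hd : bdeg f = d) (h1 : 1 ≤ d)
    (U : Submodule (ZMod 2) (Fin n → ZMod 2))
    (hU : (U : Set (Fin n → ZMod 2)) = {a | a = 0 ∨ bdeg (bderiv f a) < d - 1}) :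
    Module.finrank (ZMod 2) U ≤ n - d := by
  classical
  obtain ⟨T, hTcard, hTsum⟩ := exists_top_coeff f hd h1
  have hUmem : ∀ a, a ∈ U → (a = 0 ∨ bdeg (bderiv f a) < d - 1) := by
    intro a ha
    have : a ∈ (U : Set (Fin n → ZMod 2)) := ha
    rw [hU] at this
    exact this
  let L : U →ₗ[ZMod 2] ({i : Fin n // i ∉ T} → ZMod 2) :=
    { toFun := fun u i => (u : Fin n → ZMod 2) i.1
      map_add' := fun a b => rfl
      map_smul' := fun c a => rfl }
  have hinj : Function.Injective L := by
    rw [injective_iff_map_eq_zero]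
    intro u hu
    by_contra hne
    have hu1 : (u : Fin n → ZMod 2) ≠ 0 := fun h => hne (Subtype.ext h)
    have hfast : bdeg (bderiv f u.1) < d - 1 := by
      rcases hUmem u.1 u.2 with h | h
      · exact absurd h hu1
      · exact h
    have hsupp : ∀ i ∉ T, (u : Fin n → ZMod 2) i = 0 := by
      intro i hi
      exact congrFun hu ⟨i, hi⟩
    obtain ⟨t0, ht0⟩ : ∃ t0, (u : Fin n → ZMod 2) t0 = 1 := by
      by_contra hc
      push_neg at hc
      apply hu1
      funext i
      rcases zmod2_em ((u : Fin n → ZMod 2) i) with h | h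
      · exact h
      · exact absurd h (hc i)
    have ht0T : t0 ∈ T := by
      by_contra h
      rw [hsupp t0 h] at ht0
      exact (by decide : (0 : ZMod 2) ≠ 1) ht0
    obtain ⟨q, hq, hqd⟩ := bdeg_spec (bderiv f (u : Fin n → ZMod 2))
    have hqlt : q.totalDegree < (T.erase t0).card := by
      rw [hqd, card_erase_of_mem ht0T, hTcard]
      omega
    have hpair := pairing f (u : Fin n → ZMod 2) T t0 ht0T ht0 hsupp
    rw [hTsum] at hpair
    have hzero : ∑ S ∈ (T.erase t0).powerset, bderiv f (u : Fin n → ZMod 2) (ind S) = 0 := by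
      rw [← sum_eval_powerset (T.erase t0) q hqlt]
      exact Finset.sum_congr rfl fun S _ => (hq (ind S)).symm
    rw [hzero] at hpair
    exact (by decide : (1 : ZMod 2) ≠ 0) hpair
  have hle := LinearMap.finrank_le_finrank_of_injective hinj
  have hpi : Module.finrank (ZMod 2) ({i : Fin n // i ∉ T} → ZMod 2) = n - d := by
    rw [Module.finrank_fintype_fun_eq_card, Fintype.card_subtype_compl,
      Fintype.card_fin]
    congr 1
    rw [Fintype.card_coe, hTcard]
  rw [hpi] at hle
  exact hle
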